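/- arXiv:2102.12264 — 7 statements merged into one kernel-verified Lean document; each statement's English description precedes it below -/
import Mathlib

section
/- Let A be an n×n matrix with entries in ℝ ∪ {-∞} (no entry equal to +∞). The following are equivalent: (a) G(A) ∈ Γ, i.e. (A^k)_{ii} ≤ 0 for every index i and every integer k ≥ 1; (b) there exists a vector x ∈ ℝ^n such that x_i ≥ A_{ij} + x_j for all indices i, j (i.e. x ⪰ A ⊗ x); (c) every entry of the Kleene star A^* is different from +∞. -/
open scoped Classical

namespace NCP

/-- Square max-plus matrices over the extended reals. -/
abbrev MPMat (n : ℕ) := Fin n → Fin n → EReal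

/-- Max-plus matrix product: `(A ⊗ B) i j = ⨆ k, A i k + B k j`. -/
noncomputable def mpMul {n : ℕ} (A B : MPMat n) : MPMat n :=
  fun i j => ⨆ k : Fin n, A i k + B k j

/-- Max-plus identity matrix `E_⊗`. -/
noncomputable def mpId {n : ℕ} : MPMat n :=
  fun i j => if i = j then 0 else ⊥

/-- Max-plus matrix powers. -/
noncomputable def mpPow {n : ℕ} (A : MPMat n) : ℕ → MPMat n
  | 0 => mpId
  | k + 1 => mpMul A (mpPow A k)

/-- Entrywise Kleene star `(A^*) i j = ⨆ k, (A^k) i j`. -/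
noncomputable def mpStar {n : ℕ} (A : MPMat n) : MPMat n :=
  fun i j => ⨆ k : ℕ, mpPow A k i j

/-- Entrywise max of two matrices, `A ⊕ B`. -/
noncomputable def mpAdd {n : ℕ} (A B : MPMat n) : MPMat n :=
  fun i j => max (A i j) (B i j)

/-- `G(A) ∈ Γ`: all diagonal entries of all positive powers are ≤ 0. -/
def InGamma {n : ℕ} (A : MPMat n) : Prop :=
  ∀ i : Fin n, ∀ k : ℕ, 1 ≤ k → mpPow A k i i ≤ 0

/-- `λA`: the matrix with entries `λ + A i j`. -/
noncomputable def sm {n : ℕ} (lam : ℝ) (A : MPMat n) : MPMat n :=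
  fun i j => (lam : EReal) + A i j

/-- Division of an extended real by a natural number (±∞ map to ±∞). -/
noncomputable def edivNat (x : EReal) (k : ℕ) : EReal :=
  if x = ⊤ then ⊤ else if x = ⊥ then ⊥ else ((x.toReal / k : ℝ) : EReal)

/-- The maximum circuit mean of a max-plus matrix. -/
noncomputable def mcm {n : ℕ} (M : MPMat n) : EReal :=
  ⨆ k ∈ Finset.Icc 1 n, ⨆ i : Fin n, edivNat (mpPow M k i i) k

/-- Morphism from words to max-plus matrices determined by `f` on letters. -/
noncomputable def wordMat {α : Type*} {n : ℕ} (f : α → MPMat n) : List α → MPMat n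
  | [] => mpId
  | z :: s => mpMul (f z) (wordMat f s)

/-- Entrywise extension of `wordMat` to languages: `μ(L) i j = ⨆ s ∈ L, μ(s) i j`. -/
noncomputable def langMat {α : Type*} {n : ℕ} (f : α → MPMat n) (L : Language α) : MPMat n :=
  fun i j => ⨆ s ∈ L, wordMat f s i j

/-- The recursive sequence of languages `S(L₁, L₂, k)`. -/
def SL {α : Type*} (L1 L2 : Language α) : ℕ → Language α
  | 0 => 1
  | k + 1 => L1 * SL L1 L2 k * SL L1 L2 k * L2 + L2 * SL L1 L2 k * SL L1 L2 k * L1 + 1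

/-!
If `A` has no circuit of positive weight, cutting a circuit out of a walk never lowers its
weight, so every walk is dominated by one of length at most `n`; hence every entry of `A^*` is a
maximum of finitely many powers, none of which is `+∞`. If `A^*` is finite, then
`x i = max_j (A^*) i j` is a real vector with `A ⊗ x ≤ x`, because `A ⊗ A^* ≤ A^*`. Finally such
an `x` satisfies `(A^k) i j + x j ≤ x i` for all `k`, and taking `i = j` shows that every
circuit has non-positive weight.
-/

lemma _root_.EReal.iSup_add_le {ι : Sort*} {f : ι → EReal} {a c : EReal} (ha : a ≠ ⊤)
    (h : ∀ i, f i + a ≤ c) : (⨆ i, f i) + a ≤ c := by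
  induction a with
  | bot => simp
  | coe a =>
    have hsub {b : EReal} : b ≤ c - a ↔ b + a ≤ c :=
      EReal.le_sub_iff_add_le (.inl (EReal.coe_ne_bot a)) (.inl (EReal.coe_ne_top a))
    exact hsub.1 (iSup_le fun i => hsub.2 (h i))
  | top => exact absurd rfl ha

lemma _root_.List.exists_eq_append_cons_append_cons_of_not_nodup {α : Type*} {l : List α}
    (hl : ¬ l.Nodup) : ∃ (a : α) (xs ys zs : List α), l = xs ++ a :: (ys ++ a :: zs) := by
  induction l with
  | nil => exact absurd List.nodup_nil hl
  | cons b t ih =>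
    by_cases hb : b ∈ t
    · obtain ⟨ys, zs, rfl⟩ := List.append_of_mem hb
      exact ⟨b, [], ys, zs, rfl⟩
    · obtain ⟨a, xs, ys, zs, rfl⟩ := ih fun ht => hl (List.nodup_cons.2 ⟨hb, ht⟩)
      exact ⟨a, b :: xs, ys, zs, rfl⟩

/-- The weight of the walk from `i` through the vertices of `l`, in order; it is `⊥` unless the
walk ends at `j`. -/
noncomputable def walkWeight {n : ℕ} (A : MPMat n) : Fin n → List (Fin n) → Fin n → EReal
  | i, [], j => mpId i j
  | i, v :: l, j => A i v + walkWeight A v l j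

section

variable {n : ℕ} {A : MPMat n}

lemma mpPow_zero_apply_self (i : Fin n) : mpPow A 0 i i = 0 := if_pos rfl

lemma mpPow_succ_apply (k : ℕ) (i j : Fin n) :
    mpPow A (k + 1) i j = ⨆ v, A i v + mpPow A k v j := rfl

lemma mpPow_le_mpStar (k : ℕ) (i j : Fin n) : mpPow A k i j ≤ mpStar A i j :=
  le_iSup (fun k => mpPow A k i j) k

lemma mpPow_ne_top (hA : ∀ i j, A i j ≠ ⊤) (k : ℕ) (i j : Fin n) : mpPow A k i j ≠ ⊤ := by
  induction k generalizing i with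
  | zero => unfold mpPow mpId; split <;> simp
  | succ k ih => exact iSup_ne_top fun v => (EReal.add_lt_top (hA i v) (ih v)).ne

lemma walkWeight_le_mpPow (l : List (Fin n)) (i j : Fin n) :
    walkWeight A i l j ≤ mpPow A l.length i j := by
  induction l generalizing i with
  | nil => exact le_rfl
  | cons v l ih => exact le_iSup_of_le v (add_le_add_right (ih v) _)

lemma exists_walkWeight_eq_mpPow (k : ℕ) (i j : Fin n) :
    ∃ l : List (Fin n), l.length = k ∧ walkWeight A i l j = mpPow A k i j := by
  induction k generalizing i with
  | zero => exact ⟨[], rfl, rfl⟩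
  | succ k ih =>
    have : Nonempty (Fin n) := ⟨i⟩
    obtain ⟨v, hv⟩ := exists_eq_ciSup_of_finite (f := fun v => A i v + mpPow A k v j)
    obtain ⟨l, rfl, hl⟩ := ih v
    exact ⟨v :: l, rfl, by rw [mpPow_succ_apply, ← hv, ← hl]; rfl⟩

lemma walkWeight_append_cons (l₁ : List (Fin n)) (v : Fin n) (l₂ : List (Fin n)) (i j : Fin n) :
    walkWeight A i (l₁ ++ v :: l₂) j = walkWeight A i (l₁ ++ [v]) v + walkWeight A v l₂ j := by
  induction l₁ generalizing i with
  | nil => simp [walkWeight, mpId]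
  | cons u l₁ ih => simp only [List.cons_append, walkWeight, ih, add_assoc]

lemma walkWeight_append_cons_append_cons_le (hG : InGamma A) (xs ys zs : List (Fin n))
    (v i j : Fin n) :
    walkWeight A i (xs ++ v :: (ys ++ v :: zs)) j ≤ walkWeight A i (xs ++ v :: zs) j := by
  have hcircuit : walkWeight A v (ys ++ [v]) v ≤ 0 :=
    (walkWeight_le_mpPow _ v v).trans (hG v _ (by simp))
  rw [walkWeight_append_cons xs v (ys ++ v :: zs), walkWeight_append_cons ys v zs,
    walkWeight_append_cons xs v zs]
  calc _ ≤ walkWeight A i (xs ++ [v]) v + (0 + walkWeight A v zs j) := by gcongr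
    _ = _ := by rw [zero_add]

lemma InGamma.exists_length_le_walkWeight_le (hG : InGamma A) (l : List (Fin n)) (i j : Fin n) :
    ∃ l' : List (Fin n), l'.length ≤ n ∧ walkWeight A i l j ≤ walkWeight A i l' j := by
  induction h : l.length using Nat.strong_induction_on generalizing l with
  | _ k ih =>
    by_cases hl : l.Nodup
    · exact ⟨l, by simpa using hl.length_le_card, le_rfl⟩
    obtain ⟨v, xs, ys, zs, rfl⟩ := List.exists_eq_append_cons_append_cons_of_not_nodup hl
    obtain ⟨l', hl', hw⟩ := ih _ (by simp [← h]) (xs ++ v :: zs) rfl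
    exact ⟨l', hl', (walkWeight_append_cons_append_cons_le hG xs ys zs v i j).trans hw⟩

lemma InGamma.exists_mpPow_le (hG : InGamma A) (k : ℕ) (i j : Fin n) :
    ∃ m ≤ n, mpPow A k i j ≤ mpPow A m i j := by
  obtain ⟨l, rfl, hl⟩ := exists_walkWeight_eq_mpPow (A := A) k i j
  obtain ⟨l', hl', hw⟩ := hG.exists_length_le_walkWeight_le l i j
  exact ⟨l'.length, hl', hl ▸ hw.trans (walkWeight_le_mpPow l' i j)⟩

lemma InGamma.mpStar_ne_top (hG : InGamma A) (hA : ∀ i j, A i j ≠ ⊤) (i j : Fin n) :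
    mpStar A i j ≠ ⊤ := by
  refine ne_top_of_le_ne_top (iSup_ne_top fun m : Fin (n + 1) => mpPow_ne_top hA m i j)
    (iSup_le fun k => ?_)
  obtain ⟨m, hm, hk⟩ := hG.exists_mpPow_le k i j
  exact le_iSup_of_le (⟨m, by omega⟩ : Fin (n + 1)) hk

lemma add_mpStar_le (hA : ∀ i j, A i j ≠ ⊤) (i j m : Fin n) :
    A i j + mpStar A j m ≤ mpStar A i m := by
  rw [add_comm]
  refine EReal.iSup_add_le (hA i j) fun k => ?_
  rw [add_comm]
  exact (le_iSup_of_le j le_rfl).trans (mpPow_le_mpStar (k + 1) i m)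

lemma exists_subsolution_of_mpStar_ne_top (hA : ∀ i j, A i j ≠ ⊤)
    (hstar : ∀ i j, mpStar A i j ≠ ⊤) :
    ∃ x : Fin n → ℝ, ∀ i j, A i j + (x j : EReal) ≤ x i := by
  set p : Fin n → EReal := fun i => ⨆ j, mpStar A i j
  have hp_nonneg (i : Fin n) : 0 ≤ p i :=
    le_iSup_of_le i ((mpPow_zero_apply_self i).symm.le.trans (mpPow_le_mpStar 0 i i))
  have hp_real (i : Fin n) : ((p i).toReal : EReal) = p i :=
    EReal.coe_toReal (iSup_ne_top (hstar i)) (ne_bot_of_le_ne_bot (by simp) (hp_nonneg i))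
  refine ⟨fun i => (p i).toReal, fun i j => ?_⟩
  have : Nonempty (Fin n) := ⟨i⟩
  obtain ⟨m, hm⟩ := exists_eq_ciSup_of_finite (f := fun m => mpStar A j m)
  rw [hp_real, hp_real]
  calc A i j + p j = A i j + mpStar A j m := by rw [hm]
    _ ≤ mpStar A i m := add_mpStar_le hA i j m
    _ ≤ p i := le_iSup (fun m => mpStar A i m) m

lemma mpPow_add_le_of_subsolution {x : Fin n → ℝ} (hx : ∀ i j, A i j + (x j : EReal) ≤ x i)
    (k : ℕ) (i j : Fin n) : mpPow A k i j + (x j : EReal) ≤ x i := by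
  induction k generalizing i with
  | zero =>
    by_cases h : i = j
    · subst h; simp [mpPow, mpId]
    · simp [mpPow, mpId, h]
  | succ k ih =>
    refine EReal.iSup_add_le (EReal.coe_ne_top _) fun v => ?_
    calc A i v + mpPow A k v j + x j = A i v + (mpPow A k v j + x j) := add_assoc _ _ _
      _ ≤ A i v + x v := by gcongr; exact ih v
      _ ≤ x i := hx i v

lemma inGamma_of_subsolution {x : Fin n → ℝ} (hx : ∀ i j, A i j + (x j : EReal) ≤ x i) :
    InGamma A := fun i k _ =>
  EReal.addLECancellable_coe (x i) <| by
    rw [add_zero, add_comm]; exact mpPow_add_le_of_subsolution hx k i i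

end

/-- for a matrix with no `+∞` entry, the following are equivalent:
`G(A) ∈ Γ`; existence of a real vector `x` with `x i ≥ A i j + x j` for all `i j`;
no entry of `A^*` equals `+∞`. -/
theorem stmt1 {n : ℕ} (A : MPMat n) (hA : ∀ i j, A i j ≠ ⊤) :
    (InGamma A ↔ ∃ x : Fin n → ℝ, ∀ i j, A i j + (x j : EReal) ≤ (x i : EReal)) ∧
    (InGamma A ↔ ∀ i j, mpStar A i j ≠ ⊤) := by
  have star_of_gamma (hG : InGamma A) : ∀ i j, mpStar A i j ≠ ⊤ := hG.mpStar_ne_top hA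
  have sub_of_star := exists_subsolution_of_mpStar_ne_top hA
  have gamma_of_sub : (∃ x : Fin n → ℝ, ∀ i j, A i j + (x j : EReal) ≤ x i) → InGamma A :=
    fun ⟨_, hx⟩ => inGamma_of_subsolution hx
  exact ⟨⟨sub_of_star ∘ star_of_gamma, gamma_of_sub⟩, ⟨star_of_gamma, gamma_of_sub ∘ sub_of_star⟩⟩

end NCP
end

section
/- Let A₁, …, A_l be n×n matrices over the extended reals EReal, let μ be the monoid morphism mapping each word over the alphabet {a₁, …, a_l} to the max-plus product of the corresponding matrices (μ(ε) = E_⊗, μ(a_j) = A_j, μ(st) = μ(s) ⊗ μ(t)), and fix an index i. Then there exists a nonempty word s with μ(s)_{ii} > 0 if and only if there exists an integer k ≥ 1 with ((A₁ ⊕ ⋯ ⊕ A_l)^k)_{ii} > 0, where ⊕ denotes entrywise maximum. (Equivalently, the multi-precedence graph G(A₁, …, A_l) has a circuit with positive weight from node i iff the precedence graph G(A₁ ⊕ ⋯ ⊕ A_l) does.) -/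
open scoped Classical

namespace NCP

noncomputable def mpSup {α : Type*} {n : ℕ} (f : α → MPMat n) : MPMat n :=
  fun i j => ⨆ a, f a i j

theorem wordMat_le_mpPow_mpSup {α : Type*} {n : ℕ} (f : α → MPMat n) (s : List α) (i j : Fin n) :
    wordMat f s i j ≤ mpPow (mpSup f) s.length i j := by
  induction s generalizing i with
  | nil => rfl
  | cons a s ih =>
    exact iSup_mono fun p => add_le_add (le_iSup (fun b => f b i p) a) (ih p)

/-- At each step pick a maximizing column, then a maximizing letter; finiteness makes both
suprema attained, and `⊥ < _` makes the alphabet nonempty. -/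
theorem exists_wordMat_eq_mpPow_mpSup {α : Type*} [Finite α] {n : ℕ} (f : α → MPMat n)
    (k : ℕ) (i j : Fin n) (h : ⊥ < mpPow (mpSup f) k i j) :
    ∃ s : List α, s.length = k ∧ wordMat f s i j = mpPow (mpSup f) k i j := by
  induction k generalizing i with
  | zero => exact ⟨[], rfl, rfl⟩
  | succ k ih =>
    have : Nonempty (Fin n) := ⟨i⟩
    obtain ⟨p, hp_max⟩ := Finite.exists_max fun p => mpSup f i p + mpPow (mpSup f) k p j
    have hp : mpPow (mpSup f) (k + 1) i j = mpSup f i p + mpPow (mpSup f) k p j :=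
      le_antisymm (iSup_le hp_max) (le_iSup (fun q => mpSup f i q + mpPow (mpSup f) k q j) p)
    rw [hp, bot_lt_iff_ne_bot, ne_eq, EReal.add_eq_bot_iff, not_or] at h
    have : Nonempty α := by
      by_contra hα
      exact h.1 (@iSup_of_empty _ _ _ (not_nonempty_iff.mp hα) _)
    obtain ⟨a, ha_max⟩ := Finite.exists_max fun a => f a i p
    have ha : mpSup f i p = f a i p := le_antisymm (iSup_le ha_max) (le_iSup (f · i p) a)
    obtain ⟨s, rfl, hs⟩ := ih p (bot_lt_iff_ne_bot.mpr h.2)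
    refine ⟨a :: s, rfl, le_antisymm ?_ ?_⟩
    · exact hp ▸ wordMat_le_mpPow_mpSup f (a :: s) i j
    · rw [hp, ha, ← hs]
      exact le_iSup (fun q => f a i q + wordMat f s q j) p

/-- the multi-precedence graph of the family `A : Fin l → MPMat n` has a
circuit of positive weight from node `i` (a nonempty word `s` with `μ(s) i i > 0`)
iff the precedence graph of the entrywise max `⨆ m, A m` does. -/
theorem stmt4 {n l : ℕ} (A : Fin l → MPMat n) (i : Fin n) :
    (∃ s : List (Fin l), s ≠ [] ∧ 0 < wordMat A s i i) ↔
    (∃ k : ℕ, 1 ≤ k ∧ 0 < mpPow (fun i' j' => ⨆ m : Fin l, A m i' j') k i i) := by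
  constructor
  · rintro ⟨s, hs, hpos⟩
    exact ⟨s.length, List.length_pos_iff.mpr hs, hpos.trans_le (wordMat_le_mpPow_mpSup A s i i)⟩
  · rintro ⟨k, hk, hpos⟩
    obtain ⟨s, hs_len, hs⟩ := exists_wordMat_eq_mpPow_mpSup A k i i (bot_lt_of_lt hpos)
    refine ⟨s, ?_, hs ▸ hpos⟩
    rintro rfl
    exact Nat.one_le_iff_ne_zero.mp hk hs_len.symm

end NCP
end

section
/- Let A and B be n×n matrices over the extended reals EReal. There exists an index i with ((A ⊗ B)^*)_{ii} = +∞ if and only if there exists an index k with ((B ⊗ A)^*)_{kk} = +∞. -/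
open scoped Classical

namespace NCP

/-!
The max-plus trace `⨆ i, M i i` is cyclic, `tr (A ⊗ B) = tr (B ⊗ A)`, exactly as in ordinary
linear algebra. Since `(A ⊗ B)^(m+1) = (A ⊗ (B ⊗ A)^m) ⊗ B`, cyclicity gives
`tr ((A ⊗ B)^k) = tr ((B ⊗ A)^k)` for every `k`, and taking the supremum over `k` shows that
`⨆ i, (A ⊗ B)^* i i = ⨆ i, (B ⊗ A)^* i i`. Over the finite index set `Fin n` such a supremum
is `⊤` exactly when one of its terms is.
-/

theorem _root_.Monotone.map_iSup_of_finite {α β ι : Type*} [CompleteLinearOrder α]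
    [CompleteLattice β] [Finite ι] {f : α → β} (hf : Monotone f) (hf_bot : f ⊥ = ⊥)
    (g : ι → α) : f (⨆ i, g i) = ⨆ i, f (g i) := by
  refine le_antisymm ?_ hf.le_map_iSup
  cases isEmpty_or_nonempty ι
  · simp [hf_bot]
  · obtain ⟨i, hi⟩ := exists_eq_ciSup_of_finite (f := g)
    exact hi ▸ le_iSup (f ∘ g) i

theorem _root_.EReal.add_iSup_of_finite {ι : Type*} [Finite ι] (c : EReal) (g : ι → EReal) :
    c + ⨆ i, g i = ⨆ i, c + g i :=
  Monotone.map_iSup_of_finite (fun _ _ h => add_le_add_right h c) (EReal.add_bot c) g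

theorem _root_.EReal.iSup_add_of_finite {ι : Type*} [Finite ι] (g : ι → EReal) (c : EReal) :
    (⨆ i, g i) + c = ⨆ i, g i + c :=
  Monotone.map_iSup_of_finite (fun _ _ h => add_le_add_left h c) (EReal.bot_add c) g

theorem mpId_mpMul {n : ℕ} (M : MPMat n) : mpMul mpId M = M := by
  funext i j
  refine le_antisymm (iSup_le fun k => ?_) (le_iSup_of_le i (by simp [mpId]))
  by_cases h : i = k <;> simp [mpId, h]

theorem mpMul_mpId {n : ℕ} (M : MPMat n) : mpMul M mpId = M := by
  funext i j
  refine le_antisymm (iSup_le fun k => ?_) (le_iSup_of_le j (by simp [mpId]))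
  by_cases h : k = j <;> simp [mpId, h]

theorem mpMul_assoc {n : ℕ} (A B C : MPMat n) :
    mpMul (mpMul A B) C = mpMul A (mpMul B C) := by
  funext i j
  simp only [mpMul, EReal.iSup_add_of_finite, EReal.add_iSup_of_finite, add_assoc]
  exact iSup_comm

theorem mpPow_succ_mpMul {n : ℕ} (A B : MPMat n) (m : ℕ) :
    mpPow (mpMul A B) (m + 1) = mpMul (mpMul A (mpPow (mpMul B A) m)) B := by
  induction m with
  | zero => simp only [mpPow, mpMul_mpId]
  | succ m ih =>
    rw [mpPow, ih, mpPow]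
    simp only [mpMul_assoc]

noncomputable def mpTrace {n : ℕ} (M : MPMat n) : EReal :=
  ⨆ i, M i i

theorem mpTrace_mpMul_comm {n : ℕ} (A B : MPMat n) :
    mpTrace (mpMul A B) = mpTrace (mpMul B A) :=
  iSup_comm.trans (iSup_congr fun _ => iSup_congr fun _ => add_comm _ _)

theorem mpTrace_mpPow_mpMul_comm {n : ℕ} (A B : MPMat n) (k : ℕ) :
    mpTrace (mpPow (mpMul A B) k) = mpTrace (mpPow (mpMul B A) k) := by
  cases k with
  | zero => rfl
  | succ m => rw [mpPow_succ_mpMul, mpTrace_mpMul_comm, ← mpMul_assoc]; rfl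

theorem iSup_mpStar_diag {n : ℕ} (M : MPMat n) :
    ⨆ i, mpStar M i i = ⨆ k, mpTrace (mpPow M k) :=
  iSup_comm

theorem mpStar_diag_eq_top_iff {n : ℕ} (M : MPMat n) :
    (∃ i, mpStar M i i = ⊤) ↔ ⨆ k, mpTrace (mpPow M k) = ⊤ := by
  rw [← iSup_mpStar_diag, ← Finset.sup_univ_eq_iSup, Finset.sup_eq_top_iff]
  simp only [Finset.mem_univ, true_and]

/-- `(A ⊗ B)^*` has a `+∞` diagonal entry iff `(B ⊗ A)^*` does. -/
theorem stmt5 {n : ℕ} (A B : MPMat n) :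
    (∃ i : Fin n, mpStar (mpMul A B) i i = ⊤) ↔
    (∃ k : Fin n, mpStar (mpMul B A) k k = ⊤) := by
  simp only [mpStar_diag_eq_top_iff, mpTrace_mpPow_mpMul_comm A B]

end NCP
end

section
/- Let P, I, C be n×n matrices with entries in ℝ ∪ {-∞}. The solution set Λ(P, I, C) of the Proportional-Inverse-Constant non-positive circuit problem is order-convex: if λ₁, λ₂ ∈ Λ(P, I, C) and λ ∈ ℝ satisfies λ₁ ≤ λ ≤ λ₂, then λ ∈ Λ(P, I, C). -/
/-!
Each entry of `λP ⊕ λ⁻¹I ⊕ C` is a maximum of functions affine in `λ`, hence convex in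
`λ`. Convexity of `EReal`-valued functions (with nonnegative real weights) survives `+`
and `⨆`, so every entry of every max-plus power of this matrix is convex in `λ`. Each
condition `(M_λ^k)_{ii} ≤ 0` therefore cuts out an interval, and `Λ(P, I, C)` is an
intersection of intervals.
-/

open scoped Classical

namespace NCP

/-- The matrix `λP ⊕ λ⁻¹I ⊕ C`. -/
noncomputable def picMat {n : ℕ} (P I C : MPMat n) (lam : ℝ) : MPMat n :=
  fun i j => max (max ((lam : EReal) + P i j) (((-lam : ℝ) : EReal) + I i j)) (C i j)

/-- The solution set `Λ(P, I, C)` of the PIC non-positive circuit problem. -/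
noncomputable def Lambda {n : ℕ} (P I C : MPMat n) : Set ℝ :=
  {lam : ℝ | InGamma (picMat P I C lam)}

/-- `ConvexOn ℝ univ f`, restated because `EReal` is not an `ℝ`-module. -/
def ERealConvex (f : ℝ → EReal) : Prop :=
  ∀ x y a b : ℝ, 0 ≤ a → 0 ≤ b → a + b = 1 →
    f (a * x + b * y) ≤ (a : EReal) * f x + (b : EReal) * f y

lemma coe_mul_add_coe_mul_self {a b : ℝ} (ha : 0 ≤ a) (hb : 0 ≤ b) (hab : a + b = 1)
    (c : EReal) : (a : EReal) * c + (b : EReal) * c = c := by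
  rw [← EReal.right_distrib_of_nonneg (by exact_mod_cast ha) (by exact_mod_cast hb),
    ← EReal.coe_add, hab, EReal.coe_one, one_mul]

lemma coe_mul_add_coe_mul_le_of_le {a b : ℝ} (ha : 0 ≤ a) (hb : 0 ≤ b) {u v u' v' : EReal}
    (hu : u ≤ u') (hv : v ≤ v') :
    (a : EReal) * u + (b : EReal) * v ≤ (a : EReal) * u' + (b : EReal) * v' :=
  add_le_add (mul_le_mul_of_nonneg_left hu (by exact_mod_cast ha))
    (mul_le_mul_of_nonneg_left hv (by exact_mod_cast hb))

namespace ERealConvex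

lemma affine (m : ℝ) (c : EReal) : ERealConvex fun x => ((m * x : ℝ) : EReal) + c := by
  intro x y a b ha hb hab
  refine le_of_eq ?_
  rw [EReal.left_distrib_of_nonneg_of_ne_top (by exact_mod_cast ha) (EReal.coe_ne_top a),
    EReal.left_distrib_of_nonneg_of_ne_top (by exact_mod_cast hb) (EReal.coe_ne_top b),
    add_add_add_comm, coe_mul_add_coe_mul_self ha hb hab, ← EReal.coe_mul, ← EReal.coe_mul,
    ← EReal.coe_add]
  ring_nf

lemma const (c : EReal) : ERealConvex fun _ => c := by
  simpa using affine 0 c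

lemma add {f g : ℝ → EReal} (hf : ERealConvex f) (hg : ERealConvex g) :
    ERealConvex fun x => f x + g x := by
  intro x y a b ha hb hab
  calc f (a * x + b * y) + g (a * x + b * y)
      ≤ ((a : EReal) * f x + (b : EReal) * f y) + ((a : EReal) * g x + (b : EReal) * g y) :=
        add_le_add (hf x y a b ha hb hab) (hg x y a b ha hb hab)
    _ = (a : EReal) * (f x + g x) + (b : EReal) * (f y + g y) := by
        rw [EReal.left_distrib_of_nonneg_of_ne_top (by exact_mod_cast ha) (EReal.coe_ne_top a),
          EReal.left_distrib_of_nonneg_of_ne_top (by exact_mod_cast hb) (EReal.coe_ne_top b),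
          add_add_add_comm]

lemma max {f g : ℝ → EReal} (hf : ERealConvex f) (hg : ERealConvex g) :
    ERealConvex fun x => max (f x) (g x) := by
  intro x y a b ha hb hab
  exact max_le
    ((hf x y a b ha hb hab).trans
      (coe_mul_add_coe_mul_le_of_le ha hb (le_max_left _ _) (le_max_left _ _)))
    ((hg x y a b ha hb hab).trans
      (coe_mul_add_coe_mul_le_of_le ha hb (le_max_right _ _) (le_max_right _ _)))

lemma iSup {ι : Sort*} {f : ι → ℝ → EReal} (hf : ∀ i, ERealConvex (f i)) :
    ERealConvex fun x => ⨆ i, f i x := by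
  intro x y a b ha hb hab
  exact iSup_le fun i => (hf i x y a b ha hb hab).trans
    (coe_mul_add_coe_mul_le_of_le ha hb (le_iSup (f · x) i) (le_iSup (f · y) i))

lemma ordConnected_sublevel {f : ℝ → EReal} (hf : ERealConvex f) (r : EReal) :
    Set.OrdConnected {x | f x ≤ r} := by
  refine ⟨fun x hx y hy z hz => ?_⟩
  obtain ⟨a, b, ha, hb, hab, rfl⟩ : z ∈ segment ℝ x y := by
    rwa [segment_eq_Icc (hz.1.trans hz.2)]
  simp only [smul_eq_mul]
  calc f (a * x + b * y) ≤ (a : EReal) * f x + (b : EReal) * f y := hf x y a b ha hb hab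
    _ ≤ (a : EReal) * r + (b : EReal) * r := coe_mul_add_coe_mul_le_of_le ha hb hx hy
    _ = r := coe_mul_add_coe_mul_self ha hb hab r

end ERealConvex

lemma erealConvex_picMat {n : ℕ} (P I C : MPMat n) (i j : Fin n) :
    ERealConvex fun lam => picMat P I C lam i j := by
  refine .max (.max ?_ ?_) (.const (C i j))
  · simpa using ERealConvex.affine 1 (P i j)
  · simpa using ERealConvex.affine (-1) (I i j)

lemma erealConvex_mpPow_picMat {n : ℕ} (P I C : MPMat n) (k : ℕ) (i j : Fin n) :
    ERealConvex fun lam => mpPow (picMat P I C lam) k i j := by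
  induction k generalizing i j with
  | zero => exact .const (mpId i j)
  | succ k ih => exact .iSup fun l => (erealConvex_picMat P I C i l).add (ih l j)

lemma ordConnected_Lambda {n : ℕ} (P I C : MPMat n) : (Lambda P I C).OrdConnected :=
  ⟨fun _ h1 _ h2 _ hlam i k hk =>
    ((erealConvex_mpPow_picMat P I C k i i).ordConnected_sublevel 0).out
      (h1 i k hk) (h2 i k hk) hlam⟩

theorem stmt7_general {n : ℕ} (P I C : MPMat n)
    (lam1 lam2 lam : ℝ) (h1 : lam1 ∈ Lambda P I C) (h2 : lam2 ∈ Lambda P I C)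
    (hle1 : lam1 ≤ lam) (hle2 : lam ≤ lam2) : lam ∈ Lambda P I C :=
  (ordConnected_Lambda P I C).out h1 h2 ⟨hle1, hle2⟩

/-- the solution set `Λ(P, I, C)` is order-convex. -/
theorem stmt7 {n : ℕ} (P I C : MPMat n)
    (hP : ∀ i j, P i j ≠ ⊤) (hI : ∀ i j, I i j ≠ ⊤) (hC : ∀ i j, C i j ≠ ⊤)
    (lam1 lam2 lam : ℝ) (h1 : lam1 ∈ Lambda P I C) (h2 : lam2 ∈ Lambda P I C)
    (hle1 : lam1 ≤ lam) (hle2 : lam ≤ lam2) : lam ∈ Lambda P I C :=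
  stmt7_general P I C lam1 lam2 lam h1 h2 hle1 hle2

end NCP
end

section
/- Let P, I, C be n×n matrices with entries in ℝ ∪ {-∞} and let λ ∈ ℝ. Then G(λP ⊕ λ^{-1}I ⊕ C) ∈ Γ if and only if there exists a vector x ∈ ℝ^n such that for all indices i, j: x_i ≥ λ + P_{ij} + x_j, x_i ≥ -λ + I_{ij} + x_j, and x_i ≥ C_{ij} + x_j (inequalities of extended reals, with real entries coerced into EReal). -/
open scoped Classical

namespace NCP

/-!
If `M ⊗ x ≤ x` for a real vector `x`, then `M^k ⊗ x ≤ x` for all `k`, and cancelling the finite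
`x i` on the diagonal gives `(M^k) i i ≤ 0`. Conversely, induct on `n`: eliminating the last node
gives a matrix whose powers are dominated by powers of `M`, so it has no positive circuit either
and has a real subeigenvector `y`. The constraints on the last coordinate of an extension of `y`
say that it lies between `M last j + y j` and `y i - M i last`; these bounds are compatible since
`elimLast M` records the paths through the last node, and finite since no entry of `M` is `⊤`.
The matrix `λP ⊕ λ⁻¹I ⊕ C` has no entry `⊤`, and `(λP ⊕ λ⁻¹I ⊕ C) ⊗ x ≤ x` splits into the
three systems of inequalities.
-/

lemma EReal.exists_coe_mem_Icc {a b : EReal} (hab : a ≤ b) (ha : a ≠ ⊤) (hb : b ≠ ⊥) :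
    ∃ r : ℝ, a ≤ r ∧ (r : EReal) ≤ b := by
  by_cases ha' : a = ⊥
  · exact ⟨b.toReal, ha' ▸ bot_le, EReal.coe_toReal_le hb⟩
  · exact ⟨a.toReal, (EReal.coe_toReal ha ha').ge, (EReal.coe_toReal ha ha').symm ▸ hab⟩

lemma EReal.exists_coe_between_of_forall_le {ι κ : Type*} [Fintype ι] [Fintype κ]
    (a : ι → EReal) (b : κ → EReal) (ha : ∀ i, a i ≠ ⊤) (hb : ∀ k, b k ≠ ⊥)
    (hab : ∀ i k, a i ≤ b k) : ∃ r : ℝ, (∀ i, a i ≤ r) ∧ ∀ k, (r : EReal) ≤ b k := by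
  have hsup : Finset.univ.sup a ≠ ⊤ :=
    ((Finset.sup_lt_iff bot_lt_top).2 fun i _ => (ha i).lt_top).ne
  have hinf : Finset.univ.inf b ≠ ⊥ :=
    ((Finset.lt_inf_iff bot_lt_top).2 fun k _ => (hb k).bot_lt).ne'
  obtain ⟨r, har, hrb⟩ := EReal.exists_coe_mem_Icc
    (Finset.sup_le fun i _ => Finset.le_inf fun k _ => hab i k) hsup hinf
  exact ⟨r, fun i => (Finset.le_sup (Finset.mem_univ i)).trans har,
    fun k => hrb.trans (Finset.inf_le (Finset.mem_univ k))⟩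

section MaxPlus

variable {n : ℕ}

lemma le_mpPow_succ (M : MPMat n) (k : ℕ) (i m j : Fin n) :
    M i m + mpPow M k m j ≤ mpPow M (k + 1) i j :=
  le_iSup (fun m => M i m + mpPow M k m j) m

lemma exists_mpPow_succ_eq (M : MPMat n) (k : ℕ) (i j : Fin n) :
    ∃ m, mpPow M (k + 1) i j = M i m + mpPow M k m j :=
  have : Nonempty (Fin n) := ⟨i⟩
  (exists_eq_ciSup_of_finite (f := fun m => M i m + mpPow M k m j)).imp fun _ h => h.symm

lemma InGamma.diag_nonpos {M : MPMat n} (hM : InGamma M) (i : Fin n) : M i i ≤ 0 :=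
  calc M i i = M i i + mpPow M 0 i i := by simp [mpPow, mpId]
    _ ≤ mpPow M 1 i i := le_mpPow_succ M 0 i i i
    _ ≤ 0 := hM i 1 le_rfl

/-- `M ⊗ x ≤ x`, written entrywise. -/
def IsSubeigenvector (M : MPMat n) (x : Fin n → ℝ) : Prop :=
  ∀ i j, M i j + (x j : EReal) ≤ (x i : EReal)

lemma IsSubeigenvector.mpPow {M : MPMat n} {x : Fin n → ℝ} (hx : IsSubeigenvector M x) :
    ∀ k, IsSubeigenvector (mpPow M k) x := by
  intro k
  induction k with
  | zero => intro i j; by_cases h : i = j <;> simp [NCP.mpPow, mpId, h]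
  | succ k ih =>
    intro i j
    obtain ⟨m, hm⟩ := exists_mpPow_succ_eq M k i j
    calc NCP.mpPow M (k + 1) i j + (x j : EReal) = M i m + (NCP.mpPow M k m j + x j) := by
          rw [hm, add_assoc]
      _ ≤ M i m + x m := add_le_add_right (ih m j) _
      _ ≤ x i := hx i m

lemma IsSubeigenvector.inGamma {M : MPMat n} {x : Fin n → ℝ} (hx : IsSubeigenvector M x) :
    InGamma M := fun i k _ =>
  (EReal.addLECancellable_coe (x i)).add_le_add_iff_right.mp
    (by simpa using hx.mpPow k i i)

/-- Eliminating the last node: each path `i → last → j` becomes an arc `i → j`. -/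
noncomputable def elimLast (M : MPMat (n + 1)) : MPMat n := fun i j =>
  max (M i.castSucc j.castSucc) (M i.castSucc (Fin.last n) + M (Fin.last n) j.castSucc)

/-- Each arc of `elimLast M` stands for a path of length one or two in `M`. -/
lemma exists_mpPow_elimLast_le (M : MPMat (n + 1)) (k : ℕ) (i j : Fin n) :
    ∃ l ≤ k, mpPow (elimLast M) k i j ≤ mpPow M (k + l) i.castSucc j.castSucc := by
  induction k generalizing i j with
  | zero => exact ⟨0, le_rfl, by simp [mpPow, mpId, Fin.castSucc_inj]⟩
  | succ k ih =>
    obtain ⟨m, hm⟩ := exists_mpPow_succ_eq (elimLast M) k i j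
    obtain ⟨l, hlk, hl⟩ := ih m j
    rw [hm]
    rcases max_choice (M i.castSucc m.castSucc)
      (M i.castSucc (Fin.last n) + M (Fin.last n) m.castSucc) with h | h
    · refine ⟨l, by omega, ?_⟩
      rw [elimLast, h, Nat.add_right_comm]
      exact (add_le_add_right hl _).trans (le_mpPow_succ M _ _ _ _)
    · refine ⟨l + 1, by omega, ?_⟩
      rw [elimLast, h, add_assoc, show k + 1 + (l + 1) = k + l + 1 + 1 by omega]
      exact (add_le_add_right (add_le_add_right hl _) _).trans <|
        (add_le_add_right (le_mpPow_succ M _ _ _ _) _).trans (le_mpPow_succ M _ _ _ _)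

lemma InGamma.elimLast {M : MPMat (n + 1)} (hM : InGamma M) : InGamma (elimLast M) := by
  intro i k hk
  obtain ⟨l, -, hl⟩ := exists_mpPow_elimLast_le M k i i
  exact hl.trans (hM _ _ (by omega))

lemma elimLast_ne_top {M : MPMat (n + 1)} (hM : ∀ i j, M i j ≠ ⊤) (i j : Fin n) :
    elimLast M i j ≠ ⊤ :=
  (max_lt (hM _ _).lt_top (EReal.add_lt_top (hM _ _) (hM _ _))).ne

lemma IsSubeigenvector.exists_snoc {M : MPMat (n + 1)} (hM : ∀ i j, M i j ≠ ⊤)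
    (hlast : M (Fin.last n) (Fin.last n) ≤ 0) {y : Fin n → ℝ}
    (hy : IsSubeigenvector (elimLast M) y) :
    ∃ r : ℝ, IsSubeigenvector M (Fin.snoc y r) := by
  have hsub : ∀ i : Fin n, ∀ r : ℝ,
      (r : EReal) ≤ y i - M i.castSucc (Fin.last n) ↔ M i.castSucc (Fin.last n) + r ≤ y i :=
    fun i r => by
      rw [EReal.le_sub_iff_add_le (Or.inr (EReal.coe_ne_bot _)) (Or.inr (EReal.coe_ne_top _)),
        add_comm]
  obtain ⟨r, hin, hout⟩ := EReal.exists_coe_between_of_forall_le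
    (fun j : Fin n => M (Fin.last n) j.castSucc + y j)
    (fun i : Fin n => (y i : EReal) - M i.castSucc (Fin.last n))
    (fun j => (EReal.add_lt_top (hM _ _) (EReal.coe_ne_top _)).ne)
    (fun i => by simp [sub_eq_add_neg, EReal.add_eq_bot_iff, hM])
    (fun j i => by
      rw [EReal.le_sub_iff_add_le (Or.inr (EReal.coe_ne_bot _)) (Or.inr (EReal.coe_ne_top _)),
        add_comm, ← add_assoc]
      exact (add_le_add_left (le_max_right _ _) _).trans (hy i j))
  refine ⟨r, fun i j => ?_⟩
  induction i using Fin.lastCases with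
  | last =>
    induction j using Fin.lastCases with
    | last => simpa using add_le_add_left hlast (r : EReal)
    | cast j => simpa using hin j
  | cast i =>
    induction j using Fin.lastCases with
    | last => simpa [hsub] using hout i
    | cast j => simpa using (add_le_add_left (le_max_left _ _) _).trans (hy i j)

lemma InGamma.exists_isSubeigenvector {M : MPMat n} (hM : ∀ i j, M i j ≠ ⊤) (hG : InGamma M) :
    ∃ x, IsSubeigenvector M x := by
  induction n with
  | zero => exact ⟨Fin.elim0, fun i => i.elim0⟩
  | succ n ih =>
    obtain ⟨y, hy⟩ := ih (elimLast_ne_top hM) hG.elimLast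
    obtain ⟨r, hr⟩ := hy.exists_snoc hM (hG.diag_nonpos _)
    exact ⟨_, hr⟩

theorem inGamma_iff_exists_isSubeigenvector {M : MPMat n} (hM : ∀ i j, M i j ≠ ⊤) :
    InGamma M ↔ ∃ x, IsSubeigenvector M x :=
  ⟨InGamma.exists_isSubeigenvector hM, fun ⟨_, hx⟩ => hx.inGamma⟩

end MaxPlus

section PIC

variable {n : ℕ} (P I C : MPMat n) (lam : ℝ)

lemma picMat_ne_top (hP : ∀ i j, P i j ≠ ⊤) (hI : ∀ i j, I i j ≠ ⊤) (hC : ∀ i j, C i j ≠ ⊤)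
    (i j : Fin n) : picMat P I C lam i j ≠ ⊤ :=
  (max_lt (max_lt (EReal.add_lt_top (EReal.coe_ne_top _) (hP i j))
    (EReal.add_lt_top (EReal.coe_ne_top _) (hI i j))) (hC i j).lt_top).ne

lemma picMat_add_le_iff (i j : Fin n) (a b : EReal) :
    picMat P I C lam i j + a ≤ b ↔
      (lam : EReal) + P i j + a ≤ b ∧ ((-lam : ℝ) : EReal) + I i j + a ≤ b ∧ C i j + a ≤ b := by
  simp only [picMat, ← max_add_add_right, max_le_iff, and_assoc]

end PIC

/-- `G(λP ⊕ λ⁻¹I ⊕ C) ∈ Γ` iff there is a real vector `x` with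
`x i ≥ λ + P i j + x j`, `x i ≥ -λ + I i j + x j` and `x i ≥ C i j + x j` for all `i j`. -/
theorem stmt9 {n : ℕ} (P I C : MPMat n)
    (hP : ∀ i j, P i j ≠ ⊤) (hI : ∀ i j, I i j ≠ ⊤) (hC : ∀ i j, C i j ≠ ⊤)
    (lam : ℝ) :
    InGamma (picMat P I C lam) ↔
      ∃ x : Fin n → ℝ, ∀ i j : Fin n,
        (lam : EReal) + P i j + (x j : EReal) ≤ (x i : EReal) ∧
        ((-lam : ℝ) : EReal) + I i j + (x j : EReal) ≤ (x i : EReal) ∧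
        C i j + (x j : EReal) ≤ (x i : EReal) := by
  rw [inGamma_iff_exists_isSubeigenvector (picMat_ne_top P I C lam hP hI hC)]
  simp only [IsSubeigenvector, picMat_add_le_iff]

end NCP
end

section
/- Every x*x-balanced binary string of positive length is the concatenation of two x*y-balanced binary strings, each of positive length. -/
open scoped Classical

namespace NCP

/-- A binary string (over the alphabet `{a, b}`, encoded as `{true, false}`) is
balanced if it has equally many occurrences of each letter. -/
def Balanced (s : List Bool) : Prop := s.count true = s.count false

/-- `x*x`-balanced: balanced and (empty or first letter = last letter). -/
def XXBal (s : List Bool) : Prop := Balanced s ∧ (s = [] ∨ s.head? = s.getLast?)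

/-- `x*y`-balanced: balanced and (empty or first letter ≠ last letter). -/
def XYBal (s : List Bool) : Prop := Balanced s ∧ (s = [] ∨ s.head? ≠ s.getLast?)

/-! Let `x` be the first letter of `s`, so that `s = x v x`, and follow the walk of prefix sums
of `v` that adds `1` for each `x` and `-1` for each other letter, started at height `1`. It ends at
height `-1`, so it reaches `0` by a down-step whose previous step (if any) is also a down-step;
cutting there gives `s = (x p) (y q x)` with `y ≠ x`, and both parts are `x*y`-balanced. -/

def balance (x : Bool) (l : List Bool) : ℤ := (l.count x : ℤ) - (l.count !x : ℤ)

@[simp]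
lemma balance_nil (x : Bool) : balance x [] = 0 := by
  simp [balance]

@[simp]
lemma balance_cons_self (x : Bool) (l : List Bool) : balance x (x :: l) = balance x l + 1 := by
  simp [balance]
  ring

@[simp]
lemma balance_cons_not (x : Bool) (l : List Bool) : balance x ((!x) :: l) = balance x l - 1 := by
  simp [balance]
  ring

@[simp]
lemma balance_append (x : Bool) (l m : List Bool) :
    balance x (l ++ m) = balance x l + balance x m := by
  simp only [balance, List.count_append]
  push_cast
  ring

lemma balanced_iff_balance_eq_zero (x : Bool) (l : List Bool) : Balanced l ↔ balance x l = 0 := by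
  cases x <;> simp only [balance, Balanced, Bool.not_true, Bool.not_false] <;> omega

lemma exists_eq_append_not_cons_of_balance_neg (x : Bool) :
    ∀ (l : List Bool) (n : ℕ), (n : ℤ) + balance x l < 0 →
      ∃ p q, l = p ++ (!x) :: q ∧ (n : ℤ) + balance x p = 0 ∧
        (p = [] ∨ p.getLast? = some (!x))
  | [], n, h => by rw [balance_nil] at h; omega
  | c :: l, n, h => by
    rcases Bool.eq_or_eq_not c x with rfl | rfl
    · rw [balance_cons_self] at h
      obtain ⟨p, q, rfl, hp, hlast⟩ :=
        exists_eq_append_not_cons_of_balance_neg c l (n + 1) (by push_cast; linarith)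
      have hp_ne : p ≠ [] := by rintro rfl; simp at hp; omega
      refine ⟨c :: p, q, rfl, by push_cast at hp; rw [balance_cons_self]; linarith, Or.inr ?_⟩
      rw [List.getLast?_cons_of_ne_nil hp_ne, hlast.resolve_left hp_ne]
    · cases n with
      | zero => exact ⟨[], l, rfl, by simp, Or.inl rfl⟩
      | succ m =>
        rw [balance_cons_not] at h
        obtain ⟨p, q, rfl, hp, hlast⟩ :=
          exists_eq_append_not_cons_of_balance_neg x l m (by push_cast at h; linarith)
        refine ⟨(!x) :: p, q, rfl, by push_cast; rw [balance_cons_not]; linarith, Or.inr ?_⟩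
        rcases eq_or_ne p [] with rfl | hp_ne
        · rfl
        · rw [List.getLast?_cons_of_ne_nil hp_ne, hlast.resolve_left hp_ne]

lemma XXBal.exists_eq_cons_append {s : List Bool} (hs : XXBal s) (hne : s ≠ []) :
    ∃ x v, s = x :: (v ++ [x]) := by
  obtain ⟨hbal, rfl | hends⟩ := hs
  · exact absurd rfl hne
  obtain ⟨x, r, rfl⟩ := List.exists_cons_of_ne_nil hne
  rcases List.eq_nil_or_concat r with rfl | ⟨v, y, rfl⟩
  · cases x <;> simp [Balanced] at hbal
  · rw [List.concat_eq_append, List.head?_cons, ← List.cons_append, List.getLast?_concat,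
      Option.some_inj] at hends
    exact ⟨x, v, by rw [List.concat_eq_append, hends]⟩

lemma xyBal_of_head?_of_getLast? {x : Bool} {l : List Bool} (hbal : Balanced l)
    (hhead : l.head? = some x) (hlast : l.getLast? = some (!x)) : XYBal l :=
  ⟨hbal, Or.inr (by simp [hhead, hlast])⟩

/-- every `x*x`-balanced binary string of positive length is the
concatenation of two `x*y`-balanced binary strings of positive length. -/
theorem stmt11 (s : List Bool) (hs : XXBal s) (hne : s ≠ []) :
    ∃ t u : List Bool, XYBal t ∧ XYBal u ∧ t ≠ [] ∧ u ≠ [] ∧ s = t ++ u := by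
  obtain ⟨x, v, rfl⟩ := hs.exists_eq_cons_append hne
  have hv : balance x v = -2 := by
    have := (balanced_iff_balance_eq_zero x _).1 hs.1
    simp only [balance_cons_self, balance_append, balance_nil] at this
    linarith
  obtain ⟨p, q, rfl, hp, hlast⟩ :=
    exists_eq_append_not_cons_of_balance_neg x v 1 (by rw [hv]; norm_num)
  rw [Nat.cast_one] at hp
  have hp_ne : p ≠ [] := by rintro rfl; simp at hp
  have hq : balance x q = 0 := by
    rw [balance_append, balance_cons_not] at hv
    linarith
  refine ⟨x :: p, (!x) :: (q ++ [x]), ?_, ?_, List.cons_ne_nil _ _, List.cons_ne_nil _ _, by simp⟩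
  · refine xyBal_of_head?_of_getLast? ((balanced_iff_balance_eq_zero x _).2 ?_) rfl ?_
    · rw [balance_cons_self]
      linarith
    · rw [List.getLast?_cons_of_ne_nil hp_ne, hlast.resolve_left hp_ne]
  · refine xyBal_of_head?_of_getLast? ((balanced_iff_balance_eq_zero x _).2 ?_) rfl ?_
    · simp [hq]
    · rw [← List.cons_append, List.getLast?_concat, Bool.not_not]

end NCP
end

section
/- For every k ∈ ℕ, the language S({a}, {b}, k) over the two-letter alphabet {a, b} contains every x*y-balanced binary string of length at most 2k. -/
open scoped Classical

namespace NCP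

/-
An x*y-balanced word `x m y` has a balanced middle `m`, and it lies in `S(k+1)` as soon as
`m ∈ S(k) · S(k)`. So it suffices to show by induction on `k` that every balanced word of length at
most `2k` lies in `S(k) · S(k)`, and for this that every balanced word is the product of two
x*y-balanced words. Only words `x m x` need an argument: in `m` the letter `!x` leads by two, and
the first prefix of `m` in which it does ends in `!x !x` after a balanced prefix `a`; writing
`m = a !x !x b`, the factorisation is `x m x = (x a !x) (!x b x)`.
-/

section SL

variable {α : Type*} {L₁ L₂ : Language α}

theorem nil_mem_SL (k : ℕ) : [] ∈ SL L₁ L₂ k := by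
  cases k with
  | zero => exact Language.nil_mem_one
  | succ k => exact (Language.mem_add _ _ _).2 (Or.inr Language.nil_mem_one)

theorem append_append_mem_SL_succ {k : ℕ} {a t b : List α}
    (hab : a ∈ L₁ ∧ b ∈ L₂ ∨ a ∈ L₂ ∧ b ∈ L₁) (ht : t ∈ SL L₁ L₂ k * SL L₁ L₂ k) :
    a ++ t ++ b ∈ SL L₁ L₂ (k + 1) := by
  have hmem {M₁ M₂ : Language α} (ha : a ∈ M₁) (hb : b ∈ M₂) :
      a ++ t ++ b ∈ M₁ * SL L₁ L₂ k * SL L₁ L₂ k * M₂ := by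
    rw [mul_assoc M₁]
    exact Language.append_mem_mul (Language.append_mem_mul ha ht) hb
  simp only [SL, Language.mem_add]
  rcases hab with ⟨ha, hb⟩ | ⟨ha, hb⟩
  exacts [Or.inl (Or.inl (hmem ha hb)), Or.inl (Or.inr (hmem ha hb))]

end SL

def drift (x : Bool) (l : List Bool) : ℤ := l.count x - l.count (!x)

section Drift

variable (x : Bool) (l m : List Bool)

@[simp] theorem drift_nil : drift x [] = 0 := by simp [drift]

@[simp] theorem drift_cons_self : drift x (x :: l) = drift x l + 1 := by
  simp [drift]; ring

@[simp] theorem drift_cons_not : drift x ((!x) :: l) = drift x l - 1 := by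
  simp [drift]; ring

@[simp] theorem drift_append : drift x (l ++ m) = drift x l + drift x m := by
  simp [drift, List.count_append]; ring

variable {x l}

theorem balanced_iff_drift_eq_zero : Balanced l ↔ drift x l = 0 := by
  cases x <;> simp [Balanced, drift] <;> omega

end Drift

theorem exists_eq_append_not_not_of_drift_le (x : Bool) :
    ∀ (s : ℕ) (m : List Bool), drift x m ≤ -(s + 2) →
      ∃ a b, m = a ++ (!x) :: (!x) :: b ∧ drift x a = -s
  | s, [], h => by simp at h; omega
  | 0, [c], h => by rcases Bool.eq_or_eq_not c x with rfl | rfl <;> simp at h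
  | s + 1, c :: m, h => by
    rcases Bool.eq_or_eq_not c x with hc | hc <;> subst c
    · obtain ⟨a, b, rfl, ha⟩ :=
        exists_eq_append_not_not_of_drift_le x (s + 2) m (by simp at h; omega)
      exact ⟨x :: a, b, rfl, by simp [ha]; omega⟩
    · obtain ⟨a, b, rfl, ha⟩ :=
        exists_eq_append_not_not_of_drift_le x s m (by simp at h; omega)
      exact ⟨(!x) :: a, b, rfl, by simp [ha]; omega⟩
  | 0, c :: d :: m, h => by
    rcases Bool.eq_or_eq_not c x with hc | hc <;> subst c
    · obtain ⟨a, b, hm, ha⟩ :=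
        exists_eq_append_not_not_of_drift_le x 1 (d :: m) (by simp at h; omega)
      exact ⟨x :: a, b, by rw [hm]; rfl, by simp [ha]⟩
    rcases Bool.eq_or_eq_not d x with hd | hd <;> subst d
    · obtain ⟨a, b, rfl, ha⟩ :=
        exists_eq_append_not_not_of_drift_le x 0 m (by simp at h; omega)
      exact ⟨(!x) :: x :: a, b, rfl, by simp [ha]⟩
    · exact ⟨[], m, rfl, rfl⟩

theorem Balanced.exists_eq_cons_append_singleton {w : List Bool} (hw : Balanced w)
    (hne : w ≠ []) : ∃ x m y, w = x :: m ++ [y] := by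
  obtain ⟨x, t, rfl⟩ := List.exists_cons_of_ne_nil hne
  have ht : t ≠ [] := by
    rintro rfl
    cases x <;> simp [Balanced] at hw
  exact ⟨x, t.dropLast, t.getLast ht, by rw [List.cons_append, List.dropLast_append_getLast]⟩

theorem balanced_cons_append_singleton_iff {x y : Bool} {m : List Bool} (hxy : x ≠ y) :
    Balanced (x :: m ++ [y]) ↔ Balanced m := by
  obtain rfl : y = !x := Bool.eq_not_iff.2 hxy.symm
  simp [balanced_iff_drift_eq_zero (x := x)]

theorem xyBal_cons_append_singleton {x y : Bool} {m : List Bool} (hxy : x ≠ y)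
    (hm : Balanced m) : XYBal (x :: m ++ [y]) :=
  ⟨(balanced_cons_append_singleton_iff hxy).2 hm, Or.inr (by simp [List.getLast?_cons, hxy])⟩

theorem Balanced.exists_xyBal_append {w : List Bool} (hw : Balanced w) :
    ∃ u v, w = u ++ v ∧ XYBal u ∧ XYBal v := by
  rcases eq_or_ne w [] with rfl | hne
  · exact ⟨[], [], rfl, ⟨rfl, Or.inl rfl⟩, ⟨rfl, Or.inl rfl⟩⟩
  obtain ⟨x, m, y, rfl⟩ := hw.exists_eq_cons_append_singleton hne
  rcases ne_or_eq x y with hxy | rfl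
  · exact ⟨_, [], (List.append_nil _).symm,
      xyBal_cons_append_singleton hxy ((balanced_cons_append_singleton_iff hxy).1 hw),
      ⟨rfl, Or.inl rfl⟩⟩
  have hm : drift x m = -2 := by
    rw [balanced_iff_drift_eq_zero (x := x)] at hw
    simp at hw
    omega
  obtain ⟨a, b, rfl, ha⟩ := exists_eq_append_not_not_of_drift_le x 0 m hm.le
  have hb : drift x b = 0 := by simp at hm ha; omega
  refine ⟨x :: a ++ [!x], (!x) :: b ++ [x], by simp, ?_, ?_⟩
  · exact xyBal_cons_append_singleton (Bool.not_ne_self x).symm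
      (balanced_iff_drift_eq_zero.2 (by simpa using ha))
  · exact xyBal_cons_append_singleton (Bool.not_ne_self x) (balanced_iff_drift_eq_zero.2 hb)

section Letters

variable {L₁ L₂ : Language Bool}

theorem cons_append_singleton_mem_SL_succ (h₁ : [true] ∈ L₁) (h₂ : [false] ∈ L₂) {k : ℕ}
    {x y : Bool} {t : List Bool} (hxy : x ≠ y) (ht : t ∈ SL L₁ L₂ k * SL L₁ L₂ k) :
    x :: t ++ [y] ∈ SL L₁ L₂ (k + 1) := by
  cases x <;> cases y <;> simp only [ne_eq, not_true_eq_false] at hxy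
  · exact append_append_mem_SL_succ (Or.inr ⟨h₂, h₁⟩) ht
  · exact append_append_mem_SL_succ (Or.inl ⟨h₁, h₂⟩) ht

theorem xyBal_mem_SL_succ (h₁ : [true] ∈ L₁) (h₂ : [false] ∈ L₂) {k : ℕ} {w : List Bool}
    (ih : ∀ t : List Bool, Balanced t → t.length ≤ 2 * k → t ∈ SL L₁ L₂ k * SL L₁ L₂ k)
    (hw : XYBal w) (hlen : w.length ≤ 2 * (k + 1)) : w ∈ SL L₁ L₂ (k + 1) := by
  obtain ⟨hb, rfl | hne⟩ := hw
  · exact nil_mem_SL _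
  obtain ⟨x, m, y, rfl⟩ := hb.exists_eq_cons_append_singleton (by rintro rfl; simp at hne)
  have hxy : x ≠ y := by rintro rfl; simp [List.getLast?_cons] at hne
  refine cons_append_singleton_mem_SL_succ h₁ h₂ hxy (ih m ?_ ?_)
  · exact (balanced_cons_append_singleton_iff hxy).1 hb
  · simp at hlen; omega

theorem balanced_mem_SL_mul_SL (h₁ : [true] ∈ L₁) (h₂ : [false] ∈ L₂) (k : ℕ)
    {w : List Bool} (hw : Balanced w) (hlen : w.length ≤ 2 * k) :
    w ∈ SL L₁ L₂ k * SL L₁ L₂ k := by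
  induction k generalizing w with
  | zero =>
    obtain rfl := List.eq_nil_of_length_eq_zero (Nat.le_zero.1 hlen)
    exact Language.append_mem_mul (nil_mem_SL 0) (nil_mem_SL 0)
  | succ k ih =>
    obtain ⟨u, v, rfl, hu, hv⟩ := hw.exists_xyBal_append
    rw [List.length_append] at hlen
    exact Language.append_mem_mul (xyBal_mem_SL_succ h₁ h₂ (fun _ => ih) hu (by omega))
      (xyBal_mem_SL_succ h₁ h₂ (fun _ => ih) hv (by omega))

theorem xyBal_mem_SL (h₁ : [true] ∈ L₁) (h₂ : [false] ∈ L₂) {k : ℕ} {w : List Bool}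
    (hw : XYBal w) (hlen : w.length ≤ 2 * k) : w ∈ SL L₁ L₂ k := by
  cases k with
  | zero =>
    obtain rfl := List.eq_nil_of_length_eq_zero (Nat.le_zero.1 hlen)
    exact nil_mem_SL 0
  | succ k => exact xyBal_mem_SL_succ h₁ h₂ (fun _ => balanced_mem_SL_mul_SL h₁ h₂ k) hw hlen

end Letters

/-- `S({a}, {b}, k)` contains every `x*y`-balanced binary string of
length at most `2k`. -/
theorem stmt12 (k : ℕ) (s : List Bool) (hs : XYBal s) (hlen : s.length ≤ 2 * k) :
    s ∈ SL ({[true]} : Language Bool) ({[false]} : Language Bool) k :=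
  xyBal_mem_SL (L₁ := {[true]}) (L₂ := {[false]}) rfl rfl hs hlen

end NCP
end
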